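/- Let A be a nonnegatively graded connected k-algebra, M a ℤ-graded left A-module that is s-pure in degrees l_1 < ⋯ < l_s, and f : M → M' a surjective degree-preserving A-linear morphism of graded A-modules. Then M' is also s-pure in degrees l_1, …, l_s, and f is essential if and only if the induced maps f_{l_i} : M_{l_i} → M'_{l_i} on homogeneous components are injective for all i = 1, …, s. -/

import Mathlib

/-!
Over a connected grading (`A_n = 0` for `n < 0`, `A_0 = k`) the `A`-span of a subspace
`V ⊆ M_e` is a graded submodule that vanishes below degree `e` and whose degree-`e` part is
exactly `V`. In an `s`-pure module this puts the degree-`l_i` part of `Σ_{j ≠ i} A·M_{l_j}`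
inside `Σ_{j < i} A·M_{l_j}`, which meets `M_{l_i}` trivially.

Purity passes to `M'` because `f` maps `A·M_e` onto `A·M'_e` and commutes with the
homogeneous projections. If `f` is injective on every `M_{l_i}`, a graded `g : N → M` with
`f ∘ g` onto reaches each `M_{l_i}` by lifting degreewise, hence all of `M`. Conversely, if
`0 ≠ x ∈ M_{l_i}` is killed by `f`, choose a hyperplane `V` of `M_{l_i}` missing `x`: then
`A·V + Σ_{j ≠ i} A·M_{l_j}` is a proper graded submodule that still maps onto `M'`.
-/

namespace Stmt2

variable {k A : Type} [Field k] [Ring A] [Algebra k A]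

/-- `M` is `s`-pure in degrees `l 0 < l 1 < ⋯`: `M = Σᵢ A·M_{lᵢ}` and
`M_{lᵢ} ∩ (Σ_{j<i} A·M_{lⱼ}) = 0` for every `i`. -/
def IsPure {s : ℕ} {M : Type} [AddCommGroup M] [Module k M] [Module A M]
    [IsScalarTower k A M] (ℳ : ℤ → Submodule k M) (l : Fin s → ℤ) : Prop :=
  (⨆ i : Fin s,
      (Submodule.span A (ℳ (l i) : Set M)).restrictScalars k) = ⊤ ∧
  ∀ i : Fin s, ℳ (l i) ⊓
      (⨆ j : Fin s, ⨆ _ : j < i,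
        (Submodule.span A (ℳ (l j) : Set M)).restrictScalars k) = ⊥

/-- A surjective morphism `f : M → M'` of graded modules is *essential* if every
degree-preserving morphism `g : N → M` of graded `A`-modules such that `f ∘ g` is
surjective is itself surjective. -/
def IsEssential (𝒜 : ℤ → Submodule k A) {M M' : Type}
    [AddCommGroup M] [Module k M] [Module A M] [IsScalarTower k A M]
    [AddCommGroup M'] [Module k M'] [Module A M'] [IsScalarTower k A M']
    (ℳ : ℤ → Submodule k M) (f : M →ₗ[A] M') : Prop :=
  ∀ (N : Type) (_ : AddCommGroup N) (_ : Module k N) (_ : Module A N)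
    (_ : IsScalarTower k A N) (𝒩 : ℤ → Submodule k N)
    (_ : DirectSum.Decomposition 𝒩) (_ : SetLike.GradedSMul 𝒜 𝒩)
    (g : N →ₗ[A] M), (∀ (n : ℤ) (x : N), x ∈ 𝒩 n → g x ∈ ℳ n) →
      Function.Surjective (f ∘ g) → Function.Surjective g

end Stmt2

theorem Submodule.exists_le_notMem_le_sup_span_singleton {K V : Type*} [DivisionRing K]
    [AddCommGroup V] [Module K V] {U : Submodule K V} {x : V} (hxU : x ∈ U) (hx : x ≠ 0) :
    ∃ W ≤ U, x ∉ W ∧ U ≤ W ⊔ Submodule.span K {x} := by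
  obtain ⟨W, hW⟩ := Submodule.exists_isCompl (Submodule.span K {x})
  refine ⟨U ⊓ W, inf_le_left, fun h => hx ?_, ?_⟩
  · exact Submodule.disjoint_def.mp hW.disjoint x (Submodule.mem_span_singleton_self x) h.2
  · rw [inf_sup_assoc_of_le W ((Submodule.span_singleton_le_iff_mem x U).mpr hxU),
      hW.symm.sup_eq_top, inf_top_eq]

namespace GradedModule

variable {R A M : Type*} [CommSemiring R] [Semiring A] [AddCommMonoid M] [Module R M]
  (ℳ : ℤ → Submodule R M) [DirectSum.Decomposition ℳ]

noncomputable def proj (n : ℤ) : M →ₗ[R] M :=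
  (ℳ n).subtype ∘ₗ DirectSum.component R ℤ (fun i => ℳ i) n ∘ₗ
    (DirectSum.decomposeLinearEquiv ℳ).toLinearMap

lemma proj_mem (n : ℤ) (x : M) : proj ℳ n x ∈ ℳ n := (DirectSum.decompose ℳ x n).2

variable {ℳ}

lemma proj_of_mem_same {n : ℤ} {x : M} (hx : x ∈ ℳ n) : proj ℳ n x = x :=
  DirectSum.decompose_of_mem_same ℳ hx

lemma proj_of_mem_ne {m n : ℤ} {x : M} (hx : x ∈ ℳ m) (h : m ≠ n) : proj ℳ n x = 0 :=
  DirectSum.decompose_of_mem_ne ℳ hx h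

lemma map_proj {N F : Type*} [AddCommMonoid N] [Module R N] {𝒩 : ℤ → Submodule R N}
    [DirectSum.Decomposition 𝒩] [FunLike F N M] [AddMonoidHomClass F N M] (f : F)
    (hf : ∀ (n : ℤ) (x : N), x ∈ 𝒩 n → f x ∈ ℳ n) (n : ℤ) (x : N) :
    f (proj 𝒩 n x) = proj ℳ n (f x) := by
  induction x using DirectSum.Decomposition.inductionOn 𝒩 with
  | zero => simp
  | @homogeneous m y =>
      rcases eq_or_ne m n with rfl | hmn
      · rw [proj_of_mem_same y.2, proj_of_mem_same (hf m y y.2)]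
      · rw [proj_of_mem_ne y.2 hmn, proj_of_mem_ne (hf m y y.2) hmn, map_zero]
  | add y z hy hz => simp only [map_add, hy, hz]

variable [Module A M]

lemma image_component_of_surjective {M' : Type*} [AddCommMonoid M'] [Module R M'] [Module A M']
    {ℳ' : ℤ → Submodule R M'} [DirectSum.Decomposition ℳ'] {f : M →ₗ[A] M'}
    (hf : ∀ (n : ℤ) (x : M), x ∈ ℳ n → f x ∈ ℳ' n) (hsurj : Function.Surjective f) (e : ℤ) :
    f '' (ℳ e : Set M) = ℳ' e := by
  refine Set.Subset.antisymm (Set.image_subset_iff.mpr fun x hx => hf e x hx) fun y hy => ?_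
  obtain ⟨x, rfl⟩ := hsurj y
  exact ⟨proj ℳ e x, proj_mem ℳ e x, (map_proj f hf e x).trans (proj_of_mem_same hy)⟩

variable [Algebra R A] {𝒜 : ℤ → Submodule R A}

lemma proj_smul_of_mem [SetLike.GradedSMul 𝒜 ℳ] {d : ℤ} {a : A} (ha : a ∈ 𝒜 d)
    (n : ℤ) (x : M) : proj ℳ n (a • x) = a • proj ℳ (n - d) x := by
  induction x using DirectSum.Decomposition.inductionOn ℳ with
  | zero => simp
  | @homogeneous m y =>
      have hay : a • (y : M) ∈ ℳ (d + m) := SetLike.GradedSMul.smul_mem ha y.2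
      rcases eq_or_ne (d + m) n with rfl | hne
      · rw [proj_of_mem_same hay, add_sub_cancel_left, proj_of_mem_same y.2]
      · rw [proj_of_mem_ne hay hne, proj_of_mem_ne y.2 (by omega), smul_zero]
  | add y z hy hz => rw [smul_add, map_add, hy, hz, map_add, smul_add]

variable (𝒜) [GradedAlgebra 𝒜] [SetLike.GradedSMul 𝒜 ℳ]

open scoped Classical in
lemma proj_smul (n : ℤ) (a : A) (x : M) :
    proj ℳ n (a • x) = ∑ d ∈ (DirectSum.decompose 𝒜 a).support,
      (DirectSum.decompose 𝒜 a d : A) • proj ℳ (n - d) x := by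
  conv_lhs => rw [← DirectSum.sum_support_decompose 𝒜 a, Finset.sum_smul, map_sum]
  exact Finset.sum_congr rfl fun d _ => proj_smul_of_mem (DirectSum.decompose 𝒜 a d).2 n x

end GradedModule

open GradedModule

section HomogeneousSpan

variable {R A M : Type*} [CommSemiring R] [Semiring A] [AddCommMonoid M] [Module R M]
  [Module A M] {ℳ : ℤ → Submodule R M} [DirectSum.Decomposition ℳ]

theorem Submodule.isHomogeneous_span [Algebra R A] (𝒜 : ℤ → Submodule R A) [GradedAlgebra 𝒜]
    [SetLike.GradedSMul 𝒜 ℳ] {S : Set M} (hS : ∀ x ∈ S, SetLike.IsHomogeneousElem ℳ x) :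
    (Submodule.span A S).IsHomogeneous ℳ := by
  intro n x hx
  change proj ℳ n x ∈ _
  induction hx using Submodule.span_induction generalizing n with
  | mem y hy =>
      obtain ⟨m, hm⟩ := hS y hy
      rcases eq_or_ne m n with rfl | hmn
      · rw [proj_of_mem_same hm]; exact Submodule.subset_span hy
      · rw [proj_of_mem_ne hm hmn]; exact zero_mem _
  | zero => simp
  | add y z _ _ hy hz => rw [map_add]; exact add_mem (hy n) (hz n)
  | smul a y _ hy =>
      rw [proj_smul 𝒜]
      exact Submodule.sum_mem _ fun d _ => Submodule.smul_mem _ _ (hy (n - d))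

theorem Submodule.IsHomogeneous.iSup {ι : Sort*} {p : ι → Submodule A M}
    (hp : ∀ i, (p i).IsHomogeneous ℳ) : (⨆ i, p i).IsHomogeneous ℳ := by
  intro n x hx
  change proj ℳ n x ∈ _
  induction hx using Submodule.iSup_induction' with
  | mem i y hy => exact Submodule.mem_iSup_of_mem i (hp i n hy)
  | zero => simp
  | add y z _ _ hy hz => rw [map_add]; exact add_mem hy hz

theorem Submodule.isHomogeneous_iSup_span_components [Algebra R A] (𝒜 : ℤ → Submodule R A)
    [GradedAlgebra 𝒜] [SetLike.GradedSMul 𝒜 ℳ] {ι : Type*} (l : ι → ℤ) (P : ι → Prop) :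
    (⨆ j, ⨆ _ : P j, Submodule.span A (ℳ (l j) : Set M)).IsHomogeneous ℳ :=
  .iSup fun j => .iSup fun _ => Submodule.isHomogeneous_span 𝒜 fun _ hx => ⟨l j, hx⟩

theorem Submodule.IsHomogeneous.sup {p q : Submodule A M} (hp : p.IsHomogeneous ℳ)
    (hq : q.IsHomogeneous ℳ) : (p ⊔ q).IsHomogeneous ℳ := by
  intro n x hx
  obtain ⟨y, hy, z, hz, rfl⟩ := Submodule.mem_sup.mp hx
  change proj ℳ n (y + z) ∈ _
  rw [map_add]
  exact add_mem (Submodule.mem_sup_left (hp n hy)) (Submodule.mem_sup_right (hq n hz))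

end HomogeneousSpan

section HomogeneousSubmodule

variable {R A M : Type*} [CommRing R] [Ring A] [Module R A] [AddCommGroup M] [Module R M]
  [Module A M] [IsScalarTower R A M] {ℳ : ℤ → Submodule R M} [DirectSum.Decomposition ℳ]

def Submodule.grading (p : Submodule A M) (ℳ : ℤ → Submodule R M) : ℤ → Submodule R p :=
  fun n => (ℳ n).comap (p.subtype.restrictScalars R)

noncomputable abbrev Submodule.IsHomogeneous.decomposition {p : Submodule A M}
    (hp : p.IsHomogeneous ℳ) : DirectSum.Decomposition (p.grading ℳ) := by
  refine (DirectSum.isInternal_submodule_of_iSupIndep_of_iSup_eq_top ?_ ?_).chooseDecomposition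
  · refine iSupIndep_def.mpr fun n => Submodule.disjoint_def.mpr fun y hy hy' => ?_
    have hyM : (y : M) ∈ ⨆ m, ⨆ (_ : m ≠ n), ℳ m := by
      have := Submodule.mem_map_of_mem (f := p.subtype.restrictScalars R) hy'
      simp only [Submodule.map_iSup] at this
      exact iSup₂_mono (fun m _ => Submodule.map_comap_le _ _) this
    exact Subtype.ext (Submodule.disjoint_def.mp
      ((DirectSum.Decomposition.isInternal ℳ).submodule_iSupIndep n) _ hy hyM)
  · classical
    refine eq_top_iff.mpr fun y _ => ?_
    have hy : y = ∑ n ∈ (DirectSum.decompose ℳ (y : M)).support, ⟨proj ℳ n y, hp n y.2⟩ :=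
      Subtype.ext (by rw [Submodule.coe_sum]; exact (DirectSum.sum_support_decompose ℳ _).symm)
    rw [hy]
    exact Submodule.sum_mem _ fun n _ => Submodule.mem_iSup_of_mem n (proj_mem ℳ n y)

instance Submodule.gradedSMul_grading (𝒜 : ℤ → Submodule R A) [SetLike.GradedSMul 𝒜 ℳ]
    (p : Submodule A M) : SetLike.GradedSMul 𝒜 (p.grading ℳ) where
  smul_mem _ _ _ _ ha hy := SetLike.GradedSMul.smul_mem (B := ℳ) ha hy

end HomogeneousSubmodule

namespace GradedModule

variable {R A M : Type*} [CommSemiring R] [Semiring A] [Algebra R A] [AddCommMonoid M]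
  [Module R M] [Module A M] {ℳ : ℤ → Submodule R M} [DirectSum.Decomposition ℳ]
  {𝒜 : ℤ → Submodule R A} [GradedAlgebra 𝒜]

lemma decompose_eq_zero_of_neg (hneg : ∀ n : ℤ, n < 0 → 𝒜 n = ⊥) (a : A) {d : ℤ}
    (hd : d < 0) : (DirectSum.decompose 𝒜 a d : A) = 0 :=
  (Submodule.mem_bot R).mp ((hneg d hd).le (SetLike.coe_mem _))

lemma exists_algebraMap_eq_decompose_zero (hconn : 𝒜 0 = 1) (a : A) :
    ∃ c : R, algebraMap R A c = DirectSum.decompose 𝒜 a 0 :=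
  Submodule.mem_one.mp (hconn.le (SetLike.coe_mem _))

variable [SetLike.GradedSMul 𝒜 ℳ]

lemma proj_eq_zero_of_mem_span_of_lt (hneg : ∀ n : ℤ, n < 0 → 𝒜 n = ⊥) {e n : ℤ} {x : M}
    (hx : x ∈ Submodule.span A (ℳ e : Set M)) (hn : n < e) : proj ℳ n x = 0 := by
  induction hx using Submodule.span_induction generalizing n with
  | mem y hy => exact proj_of_mem_ne hy hn.ne'
  | zero => simp
  | add y z _ _ hy hz => rw [map_add, hy hn, hz hn, add_zero]
  | smul a y _ hy =>
      rw [proj_smul 𝒜]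
      refine Finset.sum_eq_zero fun d _ => ?_
      rcases lt_or_ge d 0 with hd | hd
      · rw [decompose_eq_zero_of_neg hneg a hd, zero_smul]
      · rw [hy (by omega), smul_zero]

lemma proj_mem_iSup_lt_of_mem_iSup_ne {ι : Type*} [LinearOrder ι]
    (hneg : ∀ n : ℤ, n < 0 → 𝒜 n = ⊥) {l : ι → ℤ}
    (hl : StrictMono l) {i : ι} {x : M}
    (hx : x ∈ ⨆ j, ⨆ _ : j ≠ i, Submodule.span A (ℳ (l j) : Set M)) :
    proj ℳ (l i) x ∈ ⨆ j, ⨆ _ : j < i, Submodule.span A (ℳ (l j) : Set M) := by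
  rw [iSup_subtype'] at hx
  induction hx using Submodule.iSup_induction' with
  | mem j y hy =>
      rcases j.2.lt_or_gt with hlt | hgt
      · exact Submodule.mem_iSup_of_mem j.1 (Submodule.mem_iSup_of_mem hlt
          (Submodule.isHomogeneous_span 𝒜 (fun z hz => ⟨l j, hz⟩) (l i) hy))
      · rw [proj_eq_zero_of_mem_span_of_lt hneg hy (hl hgt)]; exact zero_mem _
  | zero => simp
  | add y z _ _ hy hz => rw [map_add]; exact add_mem hy hz

variable [IsScalarTower R A M]

lemma proj_mem_of_mem_span (hneg : ∀ n : ℤ, n < 0 → 𝒜 n = ⊥) (hconn : 𝒜 0 = 1) {e : ℤ}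
    {V : Submodule R M} (hV : V ≤ ℳ e) {x : M} (hx : x ∈ Submodule.span A (V : Set M)) :
    proj ℳ e x ∈ V := by
  induction hx using Submodule.span_induction with
  | mem y hy => rwa [proj_of_mem_same (hV hy)]
  | zero => simp
  | add y z _ _ hy hz => rw [map_add]; exact add_mem hy hz
  | smul a y hyV hy =>
      rw [proj_smul 𝒜]
      refine Submodule.sum_mem _ fun d _ => ?_
      rcases lt_trichotomy d 0 with hd | rfl | hd
      · rw [decompose_eq_zero_of_neg hneg a hd, zero_smul]; exact zero_mem V
      · obtain ⟨c, hc⟩ := exists_algebraMap_eq_decompose_zero hconn a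
        rw [← hc, algebraMap_smul, sub_zero]; exact V.smul_mem c hy
      · rw [proj_eq_zero_of_mem_span_of_lt hneg (Submodule.span_mono hV hyV) (by omega),
          smul_zero]
        exact zero_mem V

end GradedModule

namespace Stmt2

variable {k A : Type} [Field k] [Ring A] [Algebra k A]

section Pure

variable {s : ℕ} {M M' : Type} [AddCommGroup M] [Module k M] [Module A M] [IsScalarTower k A M]
  [AddCommGroup M'] [Module k M'] [Module A M'] [IsScalarTower k A M']

lemma isPure_iff (ℳ : ℤ → Submodule k M) (l : Fin s → ℤ) :
    IsPure (A := A) ℳ l ↔ (⨆ i, Submodule.span A (ℳ (l i) : Set M)) = ⊤ ∧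
      ∀ i, ∀ x ∈ ℳ (l i),
        x ∈ (⨆ j, ⨆ _ : j < i, Submodule.span A (ℳ (l j) : Set M)) → x = 0 := by
  simp only [IsPure, ← Submodule.restrictScalars_iSup, Submodule.restrictScalars_eq_top_iff,
    Submodule.eq_bot_iff, Submodule.mem_inf, Submodule.restrictScalars_mem, and_imp]

lemma IsPure.of_surjective (𝒜 : ℤ → Submodule k A) [GradedAlgebra 𝒜]
    {ℳ : ℤ → Submodule k M} [DirectSum.Decomposition ℳ] [SetLike.GradedSMul 𝒜 ℳ]
    {ℳ' : ℤ → Submodule k M'} [DirectSum.Decomposition ℳ'] {l : Fin s → ℤ} {f : M →ₗ[A] M'}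
    (hf : ∀ (n : ℤ) (x : M), x ∈ ℳ n → f x ∈ ℳ' n) (hsurj : Function.Surjective f)
    (hpure : IsPure (A := A) ℳ l) : IsPure (A := A) ℳ' l := by
  have hspan (e : ℤ) : (Submodule.span A (ℳ e : Set M)).map f = Submodule.span A (ℳ' e) := by
    rw [Submodule.map_span, image_component_of_surjective hf hsurj e]
  obtain ⟨hgen, hdisj⟩ := (isPure_iff ℳ l).mp hpure
  refine (isPure_iff ℳ' l).mpr ⟨?_, fun i y hy hyP => ?_⟩
  · rw [← LinearMap.range_eq_top.mpr hsurj, LinearMap.range_eq_map, ← hgen, Submodule.map_iSup]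
    simp only [hspan]
  · simp only [← hspan, ← Submodule.map_iSup] at hyP
    obtain ⟨x, hx, rfl⟩ := hyP
    have hx0 : proj ℳ (l i) x = 0 := hdisj i _ (proj_mem ℳ _ x)
      (Submodule.isHomogeneous_iSup_span_components 𝒜 l (· < i) (l i) hx)
    rw [← proj_of_mem_same hy, ← map_proj f hf, hx0, map_zero]

lemma isEssential_of_injective_on_components (𝒜 : ℤ → Submodule k A)
    {ℳ : ℤ → Submodule k M} {ℳ' : ℤ → Submodule k M'} [DirectSum.Decomposition ℳ']
    {ι : Type} {l : ι → ℤ} {f : M →ₗ[A] M'} (hf : ∀ (n : ℤ) (x : M), x ∈ ℳ n → f x ∈ ℳ' n)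
    (hgen : (⨆ i, Submodule.span A (ℳ (l i) : Set M)) = ⊤)
    (hinj : ∀ i, ∀ x ∈ ℳ (l i), f x = 0 → x = 0) : IsEssential 𝒜 ℳ f := by
  intro N _ _ _ _ 𝒩 _ _ g hg hfg
  rw [← LinearMap.range_eq_top, eq_top_iff, ← hgen]
  refine iSup_le fun i => Submodule.span_le.mpr fun x hx => ?_
  obtain ⟨y, hy⟩ := hfg (f x)
  have hfx : f (g (proj 𝒩 (l i) y)) = f x := by
    rw [← LinearMap.comp_apply, map_proj (f ∘ₗ g) (fun n z hz => hf n _ (hg n z hz)),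
      LinearMap.comp_apply, Function.comp_apply.symm.trans hy, proj_of_mem_same (hf _ x hx)]
  have hxy : x - g (proj 𝒩 (l i) y) = 0 :=
    hinj i _ (sub_mem hx (hg _ _ (proj_mem 𝒩 _ y))) (by rw [map_sub, hfx, sub_self])
  rw [sub_eq_zero.mp hxy]
  exact LinearMap.mem_range_self g _

lemma IsEssential.eq_top_of_isHomogeneous {𝒜 : ℤ → Submodule k A}
    {ℳ : ℤ → Submodule k M} [DirectSum.Decomposition ℳ] [SetLike.GradedSMul 𝒜 ℳ]
    {f : M →ₗ[A] M'} (hess : IsEssential 𝒜 ℳ f) {N : Submodule A M} (hN : N.IsHomogeneous ℳ)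
    (hfN : Function.Surjective (f ∘ N.subtype)) : N = ⊤ := by
  rw [← N.range_subtype]
  exact LinearMap.range_eq_top.mpr (hess N inferInstance inferInstance inferInstance
    inferInstance (N.grading ℳ) hN.decomposition inferInstance N.subtype (fun _ _ hx => hx) hfN)

lemma IsPure.mem_of_mem_span_sup {𝒜 : ℤ → Submodule k A} [GradedAlgebra 𝒜]
    {ℳ : ℤ → Submodule k M} [DirectSum.Decomposition ℳ] [SetLike.GradedSMul 𝒜 ℳ]
    (hneg : ∀ n : ℤ, n < 0 → 𝒜 n = ⊥) (hconn : 𝒜 0 = 1) {l : Fin s → ℤ} (hl : StrictMono l)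
    (hpure : IsPure (A := A) ℳ l) {i : Fin s} {V : Submodule k M} (hV : V ≤ ℳ (l i)) {x : M}
    (hx : x ∈ ℳ (l i)) (hxN : x ∈ Submodule.span A (V : Set M) ⊔
      ⨆ j, ⨆ _ : j ≠ i, Submodule.span A (ℳ (l j) : Set M)) : x ∈ V := by
  obtain ⟨w, hw, z, hz, rfl⟩ := Submodule.mem_sup.mp hxN
  have hz0 : proj ℳ (l i) z = 0 := ((isPure_iff ℳ l).mp hpure).2 i _ (proj_mem ℳ _ z)
    (proj_mem_iSup_lt_of_mem_iSup_ne hneg hl hz)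
  rw [← proj_of_mem_same hx, map_add, hz0, add_zero]
  exact proj_mem_of_mem_span hneg hconn hV hw

lemma IsEssential.injective_on_components {𝒜 : ℤ → Submodule k A} [GradedAlgebra 𝒜]
    {ℳ : ℤ → Submodule k M} [DirectSum.Decomposition ℳ] [SetLike.GradedSMul 𝒜 ℳ]
    (hneg : ∀ n : ℤ, n < 0 → 𝒜 n = ⊥) (hconn : 𝒜 0 = 1) {l : Fin s → ℤ} (hl : StrictMono l)
    (hpure : IsPure (A := A) ℳ l) {f : M →ₗ[A] M'} (hsurj : Function.Surjective f)
    (hess : IsEssential 𝒜 ℳ f) : ∀ i, ∀ x ∈ ℳ (l i), f x = 0 → x = 0 := by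
  intro i x hx hfx
  by_contra hx0
  obtain ⟨V, hVle, hxV, hle⟩ := Submodule.exists_le_notMem_le_sup_span_singleton hx hx0
  set N := Submodule.span A (V : Set M) ⊔ ⨆ j, ⨆ _ : j ≠ i, Submodule.span A (ℳ (l j) : Set M)
  have hN : N.IsHomogeneous ℳ :=
    (Submodule.isHomogeneous_span 𝒜 fun y hy => ⟨l i, hVle hy⟩).sup
      (Submodule.isHomogeneous_iSup_span_components 𝒜 l (· ≠ i))
  -- `x` spans `ℳ (l i)` modulo `V` and is killed by `f`, so `f` maps `N` onto `M'`.
  have hker : ⊤ ≤ N ⊔ LinearMap.ker f := by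
    rw [← ((isPure_iff ℳ l).mp hpure).1]
    refine iSup_le fun j => Submodule.span_le.mpr fun y hy => ?_
    rcases eq_or_ne j i with rfl | hj
    · obtain ⟨v, hv, u, hu, rfl⟩ := Submodule.mem_sup.mp (hle hy)
      obtain ⟨c, rfl⟩ := Submodule.mem_span_singleton.mp hu
      exact add_mem (Submodule.mem_sup_left (Submodule.mem_sup_left (Submodule.subset_span hv)))
        (Submodule.mem_sup_right (by simp [hfx]))
    · exact Submodule.mem_sup_left (Submodule.mem_sup_right (Submodule.mem_iSup_of_mem j
        (Submodule.mem_iSup_of_mem hj (Submodule.subset_span hy))))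
  have hfN : Function.Surjective (f ∘ N.subtype) := by
    intro y
    obtain ⟨z, rfl⟩ := hsurj y
    obtain ⟨n, hn, u, hu, rfl⟩ := Submodule.mem_sup.mp (hker (Submodule.mem_top (x := z)))
    exact ⟨⟨n, hn⟩, by simp [LinearMap.mem_ker.mp hu]⟩
  have hxN : x ∈ N := (hess.eq_top_of_isHomogeneous hN hfN).symm ▸ Submodule.mem_top
  exact hxV (hpure.mem_of_mem_span_sup hneg hconn hl hVle hx hxN)

end Pure

theorem pure_image_and_essential_iff_general {M M' : Type} {s : ℕ}
    (𝒜 : ℤ → Submodule k A) [GradedAlgebra 𝒜]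
    (hneg : ∀ n : ℤ, n < 0 → 𝒜 n = ⊥) (hconn : 𝒜 0 = (1 : Submodule k A))
    [AddCommGroup M] [Module k M] [Module A M] [IsScalarTower k A M]
    [AddCommGroup M'] [Module k M'] [Module A M'] [IsScalarTower k A M']
    (ℳ : ℤ → Submodule k M) [DirectSum.Decomposition ℳ] [SetLike.GradedSMul 𝒜 ℳ]
    (ℳ' : ℤ → Submodule k M') [DirectSum.Decomposition ℳ']
    (l : Fin s → ℤ) (hl : StrictMono l)
    (f : M →ₗ[A] M') (hf : ∀ (n : ℤ) (x : M), x ∈ ℳ n → f x ∈ ℳ' n)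
    (hsurj : Function.Surjective f)
    (hpure : IsPure (A := A) ℳ l) :
    IsPure (A := A) ℳ' l ∧
      (IsEssential 𝒜 ℳ f ↔
        ∀ i : Fin s, ∀ x ∈ ℳ (l i), f x = 0 → x = 0) :=
  ⟨hpure.of_surjective 𝒜 hf hsurj,
    fun hess => hess.injective_on_components hneg hconn hl hpure hsurj,
    isEssential_of_injective_on_components 𝒜 hf ((isPure_iff ℳ l).mp hpure).1⟩

theorem pure_image_and_essential_iff {M M' : Type} {s : ℕ}
    (𝒜 : ℤ → Submodule k A) [GradedAlgebra 𝒜]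
    (hneg : ∀ n : ℤ, n < 0 → 𝒜 n = ⊥) (hconn : 𝒜 0 = (1 : Submodule k A))
    [AddCommGroup M] [Module k M] [Module A M] [IsScalarTower k A M]
    [AddCommGroup M'] [Module k M'] [Module A M'] [IsScalarTower k A M']
    (ℳ : ℤ → Submodule k M) [DirectSum.Decomposition ℳ] [SetLike.GradedSMul 𝒜 ℳ]
    (ℳ' : ℤ → Submodule k M') [DirectSum.Decomposition ℳ'] [SetLike.GradedSMul 𝒜 ℳ']
    (l : Fin s → ℤ) (hl : StrictMono l)
    (f : M →ₗ[A] M') (hf : ∀ (n : ℤ) (x : M), x ∈ ℳ n → f x ∈ ℳ' n)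
    (hsurj : Function.Surjective f)
    (hpure : IsPure (A := A) ℳ l) :
    IsPure (A := A) ℳ' l ∧
      (IsEssential 𝒜 ℳ f ↔
        ∀ i : Fin s, ∀ x ∈ ℳ (l i), f x = 0 → x = 0) :=
  pure_image_and_essential_iff_general 𝒜 hneg hconn ℳ ℳ' l hl f hf hsurj hpure

end Stmt2
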